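/- Let ⋆ be a finite-type star operation on an integral domain R, let M be a ⋆-super potent maximal ⋆-ideal of R, and let I and J be ⋆-super rigid ideals of R contained in M. Then I ⊆ J⋆ or J ⊆ I⋆. -/

import Mathlib

open FractionalIdeal

/-- The fractional ideals of `R` inside its field of fractions. -/
abbrev FracId (R : Type*) [CommRing R] : Type _ :=
  FractionalIdeal (nonZeroDivisors R) (FractionRing R)

/-- A star operation on an integral domain `R`: a map on nonzero fractional ideals satisfying
`(cA)⋆ = c·A⋆`, `R⋆ = R`, `A ⊆ A⋆`, monotonicity, and idempotence.  (The value on the zero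
ideal is irrelevant.) -/
structure StarOp (R : Type*) [CommRing R] [IsDomain R] where
  star : FracId R → FracId R
  star_smul : ∀ c : FractionRing R, c ≠ 0 → ∀ I : FracId R, I ≠ 0 →
    star (spanSingleton (nonZeroDivisors R) c * I) = spanSingleton (nonZeroDivisors R) c * star I
  star_one : star 1 = 1
  le_star : ∀ I : FracId R, I ≠ 0 → I ≤ star I
  star_mono : ∀ I J : FracId R, I ≠ 0 → J ≠ 0 → I ≤ J → star I ≤ star J
  star_idem : ∀ I : FracId R, I ≠ 0 → star (star I) = star I

namespace StarOp

variable {R : Type*} [CommRing R] [IsDomain R]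

/-- A star operation has finite type if `A⋆` is the union of `J⋆` over the nonzero finitely
generated (fractional) subideals `J` of `A`. -/
def FiniteType (s : StarOp R) : Prop :=
  ∀ I : FracId R, I ≠ 0 → ∀ x : FractionRing R, (x ∈ s.star I ↔
    ∃ J : FracId R, J ≠ 0 ∧ (J : Submodule R (FractionRing R)).FG ∧ J ≤ I ∧ x ∈ s.star J)

/-- `⋆₁ ≤ ⋆₂` : `I^⋆₁ ⊆ I^⋆₂` for every nonzero fractional ideal `I`. -/
def le (s₁ s₂ : StarOp R) : Prop := ∀ I : FracId R, I ≠ 0 → s₁.star I ≤ s₂.star I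

/-- A (nonzero integral) `⋆`-ideal: an ideal with `I⋆ = I`. -/
def IsStarIdeal (s : StarOp R) (I : Ideal R) : Prop :=
  I ≠ ⊥ ∧ s.star (I : FracId R) = (I : FracId R)

/-- A maximal `⋆`-ideal: maximal among proper integral `⋆`-ideals. -/
def IsMaxStarIdeal (s : StarOp R) (M : Ideal R) : Prop :=
  M ≠ ⊤ ∧ s.IsStarIdeal M ∧ ∀ J : Ideal R, J ≠ ⊤ → s.IsStarIdeal J → M ≤ J → J = M

/-- A nonzero ideal `I` is `⋆`-invertible if `(I·I⁻¹)⋆ = R`. -/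
def IsStarInvertible (s : StarOp R) (I : Ideal R) : Prop :=
  I ≠ ⊥ ∧ s.star ((I : FracId R) * ((1 : FracId R) / (I : FracId R))) = 1

/-- A nonzero finitely generated ideal is `⋆`-rigid if it is contained in exactly one maximal
`⋆`-ideal. -/
def IsRigid (s : StarOp R) (I : Ideal R) : Prop :=
  I ≠ ⊥ ∧ I.FG ∧ ∃! M : Ideal R, s.IsMaxStarIdeal M ∧ I ≤ M

/-- A `⋆`-rigid ideal is `⋆`-super rigid if every finitely generated ideal containing it is
`⋆`-invertible. -/
def IsSuperRigid (s : StarOp R) (I : Ideal R) : Prop :=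
  s.IsRigid I ∧ ∀ J : Ideal R, J.FG → I ≤ J → s.IsStarInvertible J

/-- A maximal `⋆`-ideal is `⋆`-potent if it contains a `⋆`-rigid ideal. -/
def IsPotent (s : StarOp R) (M : Ideal R) : Prop :=
  s.IsMaxStarIdeal M ∧ ∃ I : Ideal R, s.IsRigid I ∧ I ≤ M

/-- A maximal `⋆`-ideal is `⋆`-super potent if it contains a `⋆`-super rigid ideal. -/
def IsSuperPotent (s : StarOp R) (M : Ideal R) : Prop :=
  s.IsMaxStarIdeal M ∧ ∃ I : Ideal R, s.IsSuperRigid I ∧ I ≤ M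

/-- `R` is `⋆`-potent if every maximal `⋆`-ideal is `⋆`-potent. -/
def PotentDomain (s : StarOp R) : Prop :=
  ∀ M : Ideal R, s.IsMaxStarIdeal M → s.IsPotent M

/-- `R` is `⋆`-super potent if every maximal `⋆`-ideal is `⋆`-super potent. -/
def SuperPotentDomain (s : StarOp R) : Prop :=
  ∀ M : Ideal R, s.IsMaxStarIdeal M → s.IsSuperPotent M

end StarOp

section TOperation

variable {R : Type*} [CommRing R] [IsDomain R]

/-- The `v`-operation `J ↦ (J⁻¹)⁻¹` on fractional ideals. -/
noncomputable def vOp (J : FracId R) : FracId R :=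
  (1 : FracId R) / ((1 : FracId R) / J)

/-- The `t`-closure of a fractional ideal: the union of `J^v` over all nonzero finitely
generated subideals `J` (realized as a submodule of the fraction field). -/
noncomputable def tOp (I : FracId R) : Submodule R (FractionRing R) :=
  ⨆ J ∈ {J : FracId R | J ≠ 0 ∧ (J : Submodule R (FractionRing R)).FG ∧ J ≤ I},
    ((vOp J : FracId R) : Submodule R (FractionRing R))

/-- A (nonzero integral) `t`-ideal. -/
def IsTIdeal (I : Ideal R) : Prop :=
  I ≠ ⊥ ∧ tOp (I : FracId R) = ((I : FracId R) : Submodule R (FractionRing R))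

/-- A maximal `t`-ideal: maximal among proper integral `t`-ideals. -/
def IsMaxTIdeal (M : Ideal R) : Prop :=
  M ≠ ⊤ ∧ IsTIdeal M ∧ ∀ J : Ideal R, J ≠ ⊤ → IsTIdeal J → M ≤ J → J = M

/-- A nonzero ideal `I` is `t`-invertible if `(I·I⁻¹)^t = R`. -/
def IsTInvertible (I : Ideal R) : Prop :=
  I ≠ ⊥ ∧ tOp ((I : FracId R) * ((1 : FracId R) / (I : FracId R))) =
    ((1 : FracId R) : Submodule R (FractionRing R))

/-- A nonzero finitely generated ideal is `t`-rigid if it is contained in exactly one maximal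
`t`-ideal. -/
def IsTRigid (I : Ideal R) : Prop :=
  I ≠ ⊥ ∧ I.FG ∧ ∃! M : Ideal R, IsMaxTIdeal M ∧ I ≤ M

/-- A `t`-rigid ideal is `t`-super rigid if every finitely generated ideal containing it is
`t`-invertible. -/
def IsTSuperRigid (I : Ideal R) : Prop :=
  IsTRigid I ∧ ∀ J : Ideal R, J.FG → I ≤ J → IsTInvertible J

/-- A maximal `t`-ideal is `t`-potent if it contains a `t`-rigid ideal. -/
def IsTPotent (M : Ideal R) : Prop :=
  IsMaxTIdeal M ∧ ∃ I : Ideal R, IsTRigid I ∧ I ≤ M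

/-- A maximal `t`-ideal is `t`-super potent if it contains a `t`-super rigid ideal. -/
def IsTSuperPotent (M : Ideal R) : Prop :=
  IsMaxTIdeal M ∧ ∃ I : Ideal R, IsTSuperRigid I ∧ I ≤ M

end TOperation

/-- `R` is `t`-potent if every maximal `t`-ideal is `t`-potent. -/
def TPotentDomain (R : Type*) [CommRing R] [IsDomain R] : Prop :=
  ∀ M : Ideal R, IsMaxTIdeal M → IsTPotent M

/-- `R` is `t`-super potent if every maximal `t`-ideal is `t`-super potent. -/
def TSuperPotentDomain (R : Type*) [CommRing R] [IsDomain R] : Prop :=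
  ∀ M : Ideal R, IsMaxTIdeal M → IsTSuperPotent M

/-- An ideal is invertible if `I·I⁻¹ = R` (as fractional ideals). -/
def IsInvertibleIdeal {R : Type*} [CommRing R] [IsDomain R] (I : Ideal R) : Prop :=
  I ≠ ⊥ ∧ (I : FracId R) * ((1 : FracId R) / (I : FracId R)) = 1

/-- An ideal `M` is `d`-super potent if it contains a nonzero finitely generated ideal `I`
such that every finitely generated ideal containing `I` is invertible. -/
def IsDSuperPotent {R : Type*} [CommRing R] [IsDomain R] (M : Ideal R) : Prop :=
  ∃ I : Ideal R, I ≠ ⊥ ∧ I.FG ∧ I ≤ M ∧ ∀ J : Ideal R, J.FG → I ≤ J → IsInvertibleIdeal J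

/-- An ideal `P` is divided (`P = P R_P`): every `x ∈ P` is divisible, within `P`, by every
`s ∉ P`. -/
def IsDividedIdeal {R : Type*} [CommRing R] (P : Ideal R) : Prop :=
  ∀ x ∈ P, ∀ s ∉ P, ∃ y ∈ P, x = s * y

/-- A divided prime ideal. -/
def IsDividedPrime {R : Type*} [CommRing R] (P : Ideal R) : Prop :=
  P.IsPrime ∧ IsDividedIdeal P

/-- A valuation domain: an integral domain in which, for any two elements, one divides the
other (equivalently, the ideals are totally ordered by inclusion). -/
def IsValuationDomain (A : Type*) [CommRing A] : Prop :=
  IsDomain A ∧ ∀ a b : A, a ∣ b ∨ b ∣ a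

/-- A height-one prime: a nonzero prime ideal such that the only prime strictly below it
is `(0)`. -/
def HeightOnePrime {R : Type*} [CommRing R] (P : Ideal R) : Prop :=
  P.IsPrime ∧ P ≠ ⊥ ∧ ∀ Q : Ideal R, Q.IsPrime → Q < P → Q = ⊥

/-- `R` has `t`-dimension one: every maximal `t`-ideal has height one. -/
def TDimensionOne (R : Type*) [CommRing R] [IsDomain R] : Prop :=
  ∀ M : Ideal R, IsMaxTIdeal M → HeightOnePrime M

/-- `R` is completely integrally closed: if `a ∈ R` is nonzero, `u` is in the fraction field,
and `a·uⁿ ∈ R` for all `n ≥ 1`, then `u ∈ R`. -/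
def CompletelyIntegrallyClosed (R : Type*) [CommRing R] [IsDomain R] : Prop :=
  ∀ (a : R) (u : FractionRing R), a ≠ 0 →
    (∀ n : ℕ, 0 < n → ∃ r : R, algebraMap R (FractionRing R) a * u ^ n =
      algebraMap R (FractionRing R) r) →
    ∃ r : R, algebraMap R (FractionRing R) r = u

/-- A Prüfer `v`-multiplication domain: every nonzero finitely generated ideal is
`t`-invertible. -/
def IsPvMD (R : Type*) [CommRing R] [IsDomain R] : Prop :=
  ∀ I : Ideal R, I ≠ ⊥ → I.FG → IsTInvertible I

/-- `x` (in the fraction field) belongs to the localization `R_P`, i.e. `x = r/s` with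
`s ∉ P`. -/
def MemLocalizationAt {R : Type*} [CommRing R] [IsDomain R] (P : Ideal R)
    (x : FractionRing R) : Prop :=
  ∃ r s : R, s ∉ P ∧ algebraMap R (FractionRing R) s * x = algebraMap R (FractionRing R) r

/-- An essential domain: `R` is an intersection (inside its fraction field) of localizations
at primes which are valuation domains. -/
def EssentialDomain (R : Type*) [CommRing R] [IsDomain R] : Prop :=
  ∃ 𝓟 : Set (Ideal R),
    (∀ P ∈ 𝓟, ∃ hP : P.IsPrime,
      IsValuationDomain (Localization (@Ideal.primeCompl R _ P hP))) ∧
    (∀ x : FractionRing R, (∀ P ∈ 𝓟, MemLocalizationAt P x) ↔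
      ∃ r : R, algebraMap R (FractionRing R) r = x)

/-- A generalized Krull domain: `R` is a locally finite intersection of essential rank-one
(height-one) valuation localizations. -/
def GeneralizedKrullDomain (R : Type*) [CommRing R] [IsDomain R] : Prop :=
  ∃ 𝓟 : Set (Ideal R),
    (∀ P ∈ 𝓟, ∃ hP : P.IsPrime, HeightOnePrime P ∧
      IsValuationDomain (Localization (@Ideal.primeCompl R _ P hP))) ∧
    (∀ x : FractionRing R, (∀ P ∈ 𝓟, MemLocalizationAt P x) ↔
      ∃ r : R, algebraMap R (FractionRing R) r = x) ∧
    (∀ a : R, a ≠ 0 → {P : Ideal R | P ∈ 𝓟 ∧ a ∈ P}.Finite)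


section AuxSuperRigid

open FractionalIdeal

variable {R : Type*} [CommRing R] [IsDomain R]

theorem frac_one_ne_zero : (1 : FracId R) ≠ 0 := fun h =>
  one_ne_zero (eq_zero_iff.mp h 1 (one_mem_one (nonZeroDivisors R)))

theorem frac_exists_ne_zero {A : FracId R} (hA : A ≠ 0) :
    ∃ x ∈ A, x ≠ (0 : FractionRing R) := by
  by_contra h
  push_neg at h
  exact hA (eq_zero_iff.mpr h)

theorem frac_mul_ne_zero {A B : FracId R} (hA : A ≠ 0) (hB : B ≠ 0) : A * B ≠ 0 := by
  obtain ⟨a, haA, ha⟩ := frac_exists_ne_zero hA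
  obtain ⟨b, hbB, hb⟩ := frac_exists_ne_zero hB
  intro h
  exact (mul_ne_zero ha hb) (eq_zero_iff.mp h _ (mul_mem_mul haA hbB))

namespace StarOp

theorem star_ne_zero (s : StarOp R) {A : FracId R} (hA : A ≠ 0) : s.star A ≠ 0 := fun h =>
  hA (le_antisymm (h ▸ s.le_star A hA) (zero_le _))

theorem star_mul_star (s : StarOp R) (A B : FracId R) (hA : A ≠ 0) (hB : B ≠ 0) :
    s.star (A * s.star B) = s.star (A * B) := by
  have hsB := s.star_ne_zero hB
  have hAB := frac_mul_ne_zero hA hB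
  have hAsB := frac_mul_ne_zero hA hsB
  refine le_antisymm ?_ (s.star_mono _ _ hAB hAsB (mul_right_mono (s.le_star B hB)))
  have h1 : A * s.star B ≤ s.star (A * B) := by
    refine mul_le.mpr fun a haA y hy => ?_
    by_cases ha : a = 0
    · rw [ha, zero_mul]; exact (s.star (A * B)).zero_mem
    · have h2 : spanSingleton (nonZeroDivisors R) a * B ≤ A * B :=
        mul_left_mono (spanSingleton_le_iff_mem.mpr haA)
      have h3 : spanSingleton (nonZeroDivisors R) a * B ≠ 0 :=
        frac_mul_ne_zero (spanSingleton_ne_zero_iff.mpr ha) hB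
      have h4 := s.star_mono _ _ h3 hAB h2
      rw [s.star_smul a ha B hB] at h4
      exact h4 (mul_mem_mul (mem_spanSingleton_self _ a) hy)
  calc s.star (A * s.star B) ≤ s.star (s.star (A * B)) :=
        s.star_mono _ _ hAsB (s.star_ne_zero hAB) h1
    _ = s.star (A * B) := s.star_idem _ hAB

theorem star_star_mul (s : StarOp R) (A B : FracId R) (hA : A ≠ 0) (hB : B ≠ 0) :
    s.star (s.star A * B) = s.star (A * B) := by
  rw [mul_comm, s.star_mul_star B A hB hA, mul_comm]

theorem exists_max_star_ideal (s : StarOp R) (hft : s.FiniteType) (B : Ideal R)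
    (hB : B ≠ ⊥) (h1 : s.star (B : FracId R) ≠ 1) :
    ∃ N : Ideal R, s.IsMaxStarIdeal N ∧ B ≤ N := by
  classical
  have hB0 : (B : FracId R) ≠ 0 := coeIdeal_ne_zero.mpr hB
  have hle1 : s.star (B : FracId R) ≤ 1 := by
    have := s.star_mono _ 1 hB0 frac_one_ne_zero coeIdeal_le_one
    rwa [s.star_one] at this
  obtain ⟨B', hB'⟩ := le_one_iff_exists_coeIdeal.mp hle1
  set T : Set (Ideal R) := {C | s.IsStarIdeal C ∧ C ≠ ⊤ ∧ B ≤ C} with hT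
  have hB'T : B' ∈ T := by
    have hB'0 : (B' : FracId R) ≠ 0 := by rw [hB']; exact s.star_ne_zero hB0
    refine ⟨⟨coeIdeal_ne_zero.mp hB'0, by rw [hB', s.star_idem _ hB0]⟩, ?_, ?_⟩
    · intro htop
      exact h1 (by rw [← hB', htop, coeIdeal_top])
    · have h2 := s.le_star _ hB0
      rw [← hB'] at h2
      exact (coeIdeal_le_coeIdeal (FractionRing R)).mp h2
  have ih : ∀ c ⊆ T, IsChain (· ≤ ·) c → ∀ y ∈ c, ∃ ub ∈ T, ∀ z ∈ c, z ≤ ub := by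
    intro c hcT hchain y hyc
    have hsbot : sSup c ≠ (⊥ : Ideal R) := by
      intro h
      exact (hcT hyc).1.1 (le_bot_iff.mp (h ▸ le_sSup hyc))
    have hsup0 : ((sSup c : Ideal R) : FracId R) ≠ 0 := coeIdeal_ne_zero.mpr hsbot
    refine ⟨sSup c, ⟨⟨hsbot, ?_⟩, ?_, ?_⟩, fun z hz => le_sSup hz⟩
    · refine le_antisymm ?_ (s.le_star _ hsup0)
      intro x hx
      obtain ⟨Jf, hJf0, hJfFG, hJfle, hxJ⟩ := (hft _ hsup0 x).mp hx
      obtain ⟨Jf', hJf'⟩ := le_one_iff_exists_coeIdeal.mp (le_trans hJfle coeIdeal_le_one)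
      have hJf'FG : Jf'.FG := by
        rw [← hJf', coe_coeIdeal] at hJfFG
        exact (IsLocalization.coeSubmodule_fg _
          (IsFractionRing.injective R (FractionRing R)) _).mp hJfFG
      have hJf'le : Jf' ≤ sSup c :=
        (coeIdeal_le_coeIdeal (FractionRing R)).mp (by rw [hJf']; exact hJfle)
      have hcomp : IsCompactElement Jf' :=
        (Submodule.fg_iff_compact (Jf' : Submodule R R)).mp hJf'FG
      obtain ⟨C, hCc, hleC⟩ :=
        (CompleteLattice.isCompactElement_iff_le_of_directed_sSup_le
          (Ideal R) Jf').mp hcomp c ⟨y, hyc⟩ hchain.directedOn hJf'le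
      have hC0 : ((C : Ideal R) : FracId R) ≠ 0 :=
        coeIdeal_ne_zero.mpr fun hbot => (hcT hCc).1.1 hbot
      have h5 : Jf ≤ (C : FracId R) := by
        rw [← hJf']; exact (coeIdeal_le_coeIdeal (FractionRing R)).mpr hleC
      have h6 := s.star_mono _ _ hJf0 hC0 h5
      rw [(hcT hCc).1.2] at h6
      exact (coeIdeal_le_coeIdeal (FractionRing R)).mpr (le_sSup hCc) (h6 hxJ)
    · intro htop
      have h1m : (1 : R) ∈ sSup c := htop ▸ Submodule.mem_top
      obtain ⟨C, hCc, h1C⟩ :=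
        Submodule.mem_sSup_of_directed ⟨y, hyc⟩ hchain.directedOn |>.mp h1m
      exact (hcT hCc).2.1 ((Ideal.eq_top_iff_one C).mpr h1C)
    · exact le_trans (hcT hyc).2.2 (le_sSup hyc)
  obtain ⟨m, hB'm, hmT, hmax⟩ := zorn_le_nonempty₀ T ih B' hB'T
  refine ⟨m, ⟨hmT.2.1, hmT.1, fun Jid hJtop hJstar hmJ => ?_⟩, le_trans hB'T.2.2 hB'm⟩
  exact le_antisymm (hmax ⟨hJstar, hJtop, le_trans (le_trans hB'T.2.2 hB'm) hmJ⟩ hmJ) hmJ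

theorem key_superRigid (s : StarOp R) (hft : s.FiniteType) (M : Ideal R)
    (hMmax : s.IsMaxStarIdeal M) (I : Ideal R) (hI : s.IsSuperRigid I) (hIM : I ≤ M)
    (A : Ideal R) (hIA : I ≤ A) (hInv : s.IsStarInvertible A)
    (h : ¬ ((1 : FracId R) / (A : FracId R) * (I : FracId R) ≤ (M : FracId R))) :
    s.star (A : FracId R) = s.star (I : FracId R) := by
  have hA0 : (A : FracId R) ≠ 0 := coeIdeal_ne_zero.mpr hInv.1
  have hI0 : (I : FracId R) ≠ 0 := coeIdeal_ne_zero.mpr hI.1.1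
  have hone : (1 : FracId R) ≤ 1 / (A : FracId R) :=
    (le_div_iff_mul_le hA0).mpr (by rw [one_mul]; exact coeIdeal_le_one)
  have hdiv0 : (1 : FracId R) / (A : FracId R) ≠ 0 := fun h0 =>
    frac_one_ne_zero (le_antisymm (h0 ▸ hone) (zero_le _))
  have hB₁0 : (1 : FracId R) / (A : FracId R) * (I : FracId R) ≠ 0 :=
    frac_mul_ne_zero hdiv0 hI0
  have hIB₁ : (I : FracId R) ≤ (1 : FracId R) / (A : FracId R) * (I : FracId R) := by
    calc (I : FracId R) = 1 * (I : FracId R) := (one_mul _).symm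
      _ ≤ _ := mul_left_mono hone
  have hB₁1 : (1 : FracId R) / (A : FracId R) * (I : FracId R) ≤ 1 := by
    calc (1 : FracId R) / (A : FracId R) * (I : FracId R)
        ≤ 1 / (A : FracId R) * (A : FracId R) :=
          mul_right_mono ((coeIdeal_le_coeIdeal (FractionRing R)).mpr hIA)
      _ = (A : FracId R) * (1 / (A : FracId R)) := mul_comm _ _
      _ ≤ 1 := mul_one_div_le_one
  have hstarB₁ : s.star ((1 : FracId R) / (A : FracId R) * (I : FracId R)) = 1 := by
    by_contra hne
    obtain ⟨B₁', hB₁'⟩ := le_one_iff_exists_coeIdeal.mp hB₁1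
    have hB₁'0 : B₁' ≠ ⊥ := coeIdeal_ne_zero.mp (by rw [hB₁']; exact hB₁0)
    have hne' : s.star ((B₁' : FracId R)) ≠ 1 := by rwa [hB₁']
    obtain ⟨N, hN, hB₁'N⟩ := s.exists_max_star_ideal hft B₁' hB₁'0 hne'
    have hIN : I ≤ N :=
      le_trans ((coeIdeal_le_coeIdeal (FractionRing R)).mp (by rw [hB₁']; exact hIB₁)) hB₁'N
    obtain ⟨M₀, _, huniq⟩ := hI.1.2.2
    have hNM : N = M := (huniq N ⟨hN, hIN⟩).trans (huniq M ⟨hMmax, hIM⟩).symm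
    refine h ?_
    rw [← hB₁']
    exact (coeIdeal_le_coeIdeal (FractionRing R)).mpr (hNM ▸ hB₁'N)
  have hAdiv0 : (A : FracId R) * ((1 : FracId R) / (A : FracId R)) ≠ 0 :=
    frac_mul_ne_zero hA0 hdiv0
  calc s.star (A : FracId R)
      = s.star ((A : FracId R) * s.star ((1 : FracId R) / (A : FracId R) * (I : FracId R))) := by
        rw [hstarB₁, mul_one]
    _ = s.star ((A : FracId R) * ((1 : FracId R) / (A : FracId R) * (I : FracId R))) :=
        s.star_mul_star _ _ hA0 hB₁0
    _ = s.star (((A : FracId R) * ((1 : FracId R) / (A : FracId R))) * (I : FracId R)) := by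
        rw [mul_assoc]
    _ = s.star (s.star ((A : FracId R) * ((1 : FracId R) / (A : FracId R))) * (I : FracId R)) :=
        (s.star_star_mul _ _ hAdiv0 hI0).symm
    _ = s.star (I : FracId R) := by rw [hInv.2, one_mul]

end StarOp

end AuxSuperRigid

/-- If `M` is a `⋆`-super potent maximal `⋆`-ideal and `I, J` are `⋆`-super rigid
ideals contained in `M`, then `I ⊆ J⋆` or `J ⊆ I⋆`. -/
theorem superRigid_comparable {R : Type*} [CommRing R] [IsDomain R]
    (s : StarOp R) (hft : s.FiniteType) (M : Ideal R) (hM : s.IsSuperPotent M)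
    (I J : Ideal R) (hI : s.IsSuperRigid I) (hJ : s.IsSuperRigid J)
    (hIM : I ≤ M) (hJM : J ≤ M) :
    (I : FracId R) ≤ s.star (J : FracId R) ∨ (J : FracId R) ≤ s.star (I : FracId R) := by
  have hMmax : s.IsMaxStarIdeal M := hM.1
  have hInv : s.IsStarInvertible (I ⊔ J) := hI.2 (I ⊔ J) (Submodule.FG.sup hI.1.2.1 hJ.1.2.1) le_sup_left
  have hA0 : ((I ⊔ J : Ideal R) : FracId R) ≠ 0 := coeIdeal_ne_zero.mpr hInv.1
  have hone : (1 : FracId R) ≤ 1 / ((I ⊔ J : Ideal R) : FracId R) :=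
    (le_div_iff_mul_le hA0).mpr (by rw [one_mul]; exact coeIdeal_le_one)
  have hdiv0 : (1 : FracId R) / ((I ⊔ J : Ideal R) : FracId R) ≠ 0 := fun h0 =>
    frac_one_ne_zero (le_antisymm (h0 ▸ hone) (zero_le _))
  by_cases h₂ : (1 : FracId R) / ((I ⊔ J : Ideal R) : FracId R) * (J : FracId R) ≤ (M : FracId R)
  · by_cases h₁ :
      (1 : FracId R) / ((I ⊔ J : Ideal R) : FracId R) * (I : FracId R) ≤ (M : FracId R)
    · exfalso
      have hsum : ((I ⊔ J : Ideal R) : FracId R) *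
          ((1 : FracId R) / ((I ⊔ J : Ideal R) : FracId R)) ≤ (M : FracId R) := by
        have hsplit : ((I ⊔ J : Ideal R) : FracId R) = (I : FracId R) ⊔ (J : FracId R) := by
          rw [coeIdeal_sup, sup_eq_add]
        have h3 : (1 : FracId R) / ((I ⊔ J : Ideal R) : FracId R) *
            ((I : FracId R) ⊔ (J : FracId R)) ≤ (M : FracId R) := by
          rw [sup_eq_add, mul_add, ← sup_eq_add]
          exact sup_le h₁ h₂
        exact le_trans (le_of_eq (by rw [mul_comm, hsplit])) h3
      have hM0 : (M : FracId R) ≠ 0 := coeIdeal_ne_zero.mpr hMmax.2.1.1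
      have h1le : (1 : FracId R) ≤ (M : FracId R) := by
        have := s.star_mono _ _ (frac_mul_ne_zero hA0 hdiv0) hM0 hsum
        rwa [hInv.2, hMmax.2.1.2] at this
      obtain ⟨r, hrM, hr1⟩ := (mem_coeIdeal _).mp (one_le.mp h1le)
      have hr : r = 1 := IsFractionRing.injective R (FractionRing R) (by rw [hr1, RingHom.map_one])
      exact hMmax.1 ((Ideal.eq_top_iff_one M).mpr (hr ▸ hrM))
    · right
      have hkey := s.key_superRigid hft M hMmax I hI hIM (I ⊔ J) le_sup_left hInv h₁
      calc (J : FracId R) ≤ ((I ⊔ J : Ideal R) : FracId R) :=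
            (coeIdeal_le_coeIdeal (FractionRing R)).mpr le_sup_right
        _ ≤ s.star ((I ⊔ J : Ideal R) : FracId R) := s.le_star _ hA0
        _ = s.star (I : FracId R) := hkey
  · left
    have hkey := s.key_superRigid hft M hMmax J hJ hJM (I ⊔ J) le_sup_right hInv h₂
    calc (I : FracId R) ≤ ((I ⊔ J : Ideal R) : FracId R) :=
          (coeIdeal_le_coeIdeal (FractionRing R)).mpr le_sup_left
      _ ≤ s.star ((I ⊔ J : Ideal R) : FracId R) := s.le_star _ hA0
      _ = s.star (J : FracId R) := hkey
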